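/- For each of the three ordered paths on vertex set {1,2,3,4} with edge sets {{1,3},{2,4},{3,4}}, {{1,2},{2,4},{3,4}}, and {{1,2},{1,4},{3,4}} respectively, the canonical (Erdős–Rado) Ramsey number equals 6. That is: for each such ordered path P, every edge-coloring of the ordered complete graph K_6 contains a canonically colored copy of P, and there exists an edge-coloring of the ordered K_5 with no canonically colored copy of P. -/

import Mathlib

/-- Given an ordered graph on `Fin m` whose edge list `E` consists of pairs `(a, b)` with
`a < b`, an order-preserving injection `f : Fin m → Fin n`, and an edge-coloring `χ` of the
ordered complete graph on `Fin n`, the copy of the graph given by `f` is *canonically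
colored* if it is monochromatic, rainbow, lower lexicographic (two edges of the copy get
the same color iff they have the same smaller endpoint), or upper lexicographic (two edges
of the copy get the same color iff they have the same larger endpoint). -/
def CanonicalCopy {m n : ℕ} (E : List (Fin m × Fin m)) (χ : Sym2 (Fin n) → ℕ)
    (f : Fin m → Fin n) : Prop :=
  (∀ e ∈ E, ∀ e' ∈ E, χ s(f e.1, f e.2) = χ s(f e'.1, f e'.2)) ∨
  (∀ e ∈ E, ∀ e' ∈ E, χ s(f e.1, f e.2) = χ s(f e'.1, f e'.2) → e = e') ∨
  (∀ e ∈ E, ∀ e' ∈ E, (χ s(f e.1, f e.2) = χ s(f e'.1, f e'.2) ↔ e.1 = e'.1)) ∨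
  (∀ e ∈ E, ∀ e' ∈ E, (χ s(f e.1, f e.2) = χ s(f e'.1, f e'.2) ↔ e.2 = e'.2))

/-- The edge-coloring `χ` of the ordered complete graph on `Fin n` contains a canonically
colored copy of the ordered graph on `Fin m` with edge list `E`: a copy is given by an
order-preserving (strictly monotone) injection `f : Fin m → Fin n`. -/
def HasCanonicalCopy {m : ℕ} (E : List (Fin m × Fin m)) (n : ℕ)
    (χ : Sym2 (Fin n) → ℕ) : Prop :=
  ∃ f : Fin m → Fin n, StrictMono f ∧ CanonicalCopy E χ f

/-- First ordered graph's edge list (0-indexed). -/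
def pathA : List (Fin 4 × Fin 4) := [(0, 2), (1, 3), (2, 3)]

/-- Second ordered graph's edge list (0-indexed). -/
def pathB : List (Fin 4 × Fin 4) := [(0, 1), (1, 3), (2, 3)]

/-- Third ordered graph's edge list (0-indexed). -/
def pathC : List (Fin 4 × Fin 4) := [(0, 1), (0, 3), (2, 3)]

/-!
A copy of a three-edge path that is not canonically coloured has exactly two edges of the same
colour, and the shapes of the paths dictate which two. For the first two paths the last two
edges get different colours and the first edge shares its colour with one of them; for the third
path the first and last edges agree and differ from the middle one. On `K₆` these constraints,
imposed on a handful of 4-subsets of the vertices, contradict each other. On `K₅` explicit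
colourings (found by computer search) avoid every canonical copy, as checked exhaustively.
-/

instance {m n : ℕ} (E : List (Fin m × Fin m)) (χ : Sym2 (Fin n) → ℕ) (f : Fin m → Fin n) :
    Decidable (CanonicalCopy E χ f) := by
  unfold CanonicalCopy
  exact @instDecidableOr _ _ inferInstance
    (@instDecidableOr _ _ inferInstance (@instDecidableOr _ _ inferInstance inferInstance))

theorem not_hasCanonicalCopy_iff {E : List (Fin 4 × Fin 4)} {n : ℕ} {χ : Sym2 (Fin n) → ℕ} :
    ¬ HasCanonicalCopy E n χ ↔
      ∀ a b c d : Fin n, a < b → b < c → c < d → ¬ CanonicalCopy E χ ![a, b, c, d] := by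
  constructor
  · intro h a b c d hab hbc hcd hc
    exact h ⟨_, by simp [hab, hbc, hcd], hc⟩
  · rintro H ⟨f, hf, hc⟩
    refine H (f 0) (f 1) (f 2) (f 3) (hf (by decide)) (hf (by decide)) (hf (by decide)) ?_
    convert hc
    funext i
    fin_cases i <;> rfl

def edgeColor {m n : ℕ} (χ : Sym2 (Fin n) → ℕ) (f : Fin m → Fin n) (e : Fin m × Fin m) : ℕ :=
  χ s(f e.1, f e.2)

section ThreeEdges

variable {m n : ℕ} {χ : Sym2 (Fin n) → ℕ} {f : Fin m → Fin n} {e₁ e₂ e₃ : Fin m × Fin m}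

theorem edgeColor_of_not_canonicalCopy_triple_of_snd (h₁₂ : e₁.2 ≠ e₂.2) (h₂₃ : e₂.2 = e₃.2)
    (h : ¬ CanonicalCopy [e₁, e₂, e₃] χ f) :
    edgeColor χ f e₂ ≠ edgeColor χ f e₃ ∧
      (edgeColor χ f e₁ = edgeColor χ f e₂ ∨ edgeColor χ f e₁ = edgeColor χ f e₃) := by
  -- otherwise the copy is monochromatic, upper lexicographic or rainbow
  simp only [CanonicalCopy, List.mem_cons, List.not_mem_nil, or_false, forall_eq_or_imp,
    forall_eq, ← edgeColor.eq_def] at h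
  grind

theorem edgeColor_of_not_canonicalCopy_triple_of_fst (h₁₂ : e₁.1 = e₂.1) (h₂₃ : e₂.1 ≠ e₃.1)
    (h : ¬ CanonicalCopy [e₁, e₂, e₃] χ f) (hxy : edgeColor χ f e₁ = edgeColor χ f e₂) :
    edgeColor χ f e₂ = edgeColor χ f e₃ := by
  -- otherwise the copy is lower lexicographic
  simp only [CanonicalCopy, List.mem_cons, List.not_mem_nil, or_false, forall_eq_or_imp,
    forall_eq, ← edgeColor.eq_def] at h
  grind

end ThreeEdges

section FourVertices

variable {n : ℕ} {χ : Sym2 (Fin n) → ℕ} {a b c d : Fin n}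

theorem colors_of_not_canonicalCopy_pathA (h : ¬ CanonicalCopy pathA χ ![a, b, c, d]) :
    χ s(b, d) ≠ χ s(c, d) ∧ (χ s(a, c) = χ s(b, d) ∨ χ s(a, c) = χ s(c, d)) :=
  edgeColor_of_not_canonicalCopy_triple_of_snd (e₁ := (0, 2)) (e₂ := (1, 3)) (e₃ := (2, 3))
    (by decide) rfl h

theorem colors_of_not_canonicalCopy_pathB (h : ¬ CanonicalCopy pathB χ ![a, b, c, d]) :
    χ s(b, d) ≠ χ s(c, d) ∧ (χ s(a, b) = χ s(b, d) ∨ χ s(a, b) = χ s(c, d)) :=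
  edgeColor_of_not_canonicalCopy_triple_of_snd (e₁ := (0, 1)) (e₂ := (1, 3)) (e₃ := (2, 3))
    (by decide) rfl h

theorem colors_of_not_canonicalCopy_pathC (h : ¬ CanonicalCopy pathC χ ![a, b, c, d]) :
    χ s(a, b) = χ s(c, d) ∧ χ s(a, b) ≠ χ s(a, d) := by
  have upper : χ s(a, d) ≠ χ s(c, d) ∧ (χ s(a, b) = χ s(a, d) ∨ χ s(a, b) = χ s(c, d)) :=
    edgeColor_of_not_canonicalCopy_triple_of_snd (e₁ := (0, 1)) (e₂ := (0, 3)) (e₃ := (2, 3))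
      (by decide) rfl h
  have lower : χ s(a, b) = χ s(a, d) → χ s(a, d) = χ s(c, d) :=
    edgeColor_of_not_canonicalCopy_triple_of_fst (e₁ := (0, 1)) (e₂ := (0, 3)) (e₃ := (2, 3))
      rfl (by decide) h
  omega

end FourVertices

theorem hasCanonicalCopy_pathA_six (χ : Sym2 (Fin 6) → ℕ) : HasCanonicalCopy pathA 6 χ := by
  by_contra h
  have H a b c d (hlt : a < b ∧ b < c ∧ c < d) :=
    colors_of_not_canonicalCopy_pathA (not_hasCanonicalCopy_iff.1 h a b c d hlt.1 hlt.2.1 hlt.2.2)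
  obtain ⟨ne_14_24, mem_02⟩ := H 0 1 2 4 (by decide)
  obtain ⟨ne_15_25, mem_02'⟩ := H 0 1 2 5 (by decide)
  obtain ⟨ne_15_35, -⟩ := H 0 1 3 5 (by decide)
  obtain ⟨ne_15_45, -⟩ := H 0 1 4 5 (by decide)
  obtain ⟨ne_25_35, -⟩ := H 1 2 3 5 (by decide)
  obtain ⟨ne_25_45, mem_14⟩ := H 1 2 4 5 (by decide)
  obtain ⟨-, mem_14'⟩ := H 1 3 4 5 (by decide)
  obtain ⟨-, mem_24⟩ := H 2 3 4 5 (by decide)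
  have eq_14 : χ s(1, 4) = χ s(4, 5) := by omega
  have eq_24 : χ s(2, 4) = χ s(3, 5) := by omega
  -- `χ s(0, 2) ∈ {χ s(1, 4), χ s(2, 4)} = {χ s(4, 5), χ s(3, 5)}`,
  -- which is disjoint from `{χ s(1, 5), χ s(2, 5)}`
  omega

theorem hasCanonicalCopy_pathB_six (χ : Sym2 (Fin 6) → ℕ) : HasCanonicalCopy pathB 6 χ := by
  by_contra h
  have H a b c d (hlt : a < b ∧ b < c ∧ c < d) :=
    colors_of_not_canonicalCopy_pathB (not_hasCanonicalCopy_iff.1 h a b c d hlt.1 hlt.2.1 hlt.2.2)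
  obtain ⟨ne_13_23, mem_01⟩ := H 0 1 2 3 (by decide)
  obtain ⟨ne_15_35, mem_01'⟩ := H 0 1 3 5 (by decide)
  obtain ⟨ne_15_45, mem_01''⟩ := H 0 1 4 5 (by decide)
  obtain ⟨ne_35_45, mem_13⟩ := H 1 3 4 5 (by decide)
  obtain ⟨-, mem_23⟩ := H 2 3 4 5 (by decide)
  have eq_01 : χ s(0, 1) = χ s(1, 5) := by omega
  -- `χ s(0, 1) ∈ {χ s(1, 3), χ s(2, 3)} = {χ s(3, 5), χ s(4, 5)}`, which `χ s(1, 5)` avoids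
  omega

theorem hasCanonicalCopy_pathC_six (χ : Sym2 (Fin 6) → ℕ) : HasCanonicalCopy pathC 6 χ := by
  by_contra h
  have H a b c d (hlt : a < b ∧ b < c ∧ c < d) :=
    colors_of_not_canonicalCopy_pathC (not_hasCanonicalCopy_iff.1 h a b c d hlt.1 hlt.2.1 hlt.2.2)
  obtain ⟨eq_01_25, -⟩ := H 0 1 2 5 (by decide)
  obtain ⟨eq_01_45, -⟩ := H 0 1 4 5 (by decide)
  obtain ⟨eq_23_45, ne_23_25⟩ := H 2 3 4 5 (by decide)
  exact ne_23_25 (eq_23_45.trans (eq_01_45.symm.trans eq_01_25))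

def colorA : Sym2 (Fin 5) → ℕ := fun e =>
  if e = s(0, 3) ∨ e = s(3, 4) then 1 else if e = s(1, 4) ∨ e = s(2, 3) then 2 else 0

def colorB : Sym2 (Fin 5) → ℕ := fun e =>
  if 2 ∈ e then 1 else if e = s(3, 4) then 2 else 0

def colorC : Sym2 (Fin 5) → ℕ := fun e =>
  if e = s(0, 3) ∨ e = s(0, 4) ∨ e = s(1, 3) ∨ e = s(1, 4) then 1 else 0

theorem not_hasCanonicalCopy_pathA_colorA : ¬ HasCanonicalCopy pathA 5 colorA :=
  not_hasCanonicalCopy_iff.2 (by decide)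

theorem not_hasCanonicalCopy_pathB_colorB : ¬ HasCanonicalCopy pathB 5 colorB :=
  not_hasCanonicalCopy_iff.2 (by decide)

theorem not_hasCanonicalCopy_pathC_colorC : ¬ HasCanonicalCopy pathC 5 colorC :=
  not_hasCanonicalCopy_iff.2 (by decide)

/-- Each of the three ordered graphs has canonical Ramsey number 6. -/
theorem ER_three_P4_eq_six :
    ((∀ χ : Sym2 (Fin 6) → ℕ, HasCanonicalCopy pathA 6 χ) ∧
      (∃ χ : Sym2 (Fin 5) → ℕ, ¬ HasCanonicalCopy pathA 5 χ)) ∧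
    ((∀ χ : Sym2 (Fin 6) → ℕ, HasCanonicalCopy pathB 6 χ) ∧
      (∃ χ : Sym2 (Fin 5) → ℕ, ¬ HasCanonicalCopy pathB 5 χ)) ∧
    ((∀ χ : Sym2 (Fin 6) → ℕ, HasCanonicalCopy pathC 6 χ) ∧
      (∃ χ : Sym2 (Fin 5) → ℕ, ¬ HasCanonicalCopy pathC 5 χ)) :=
  ⟨⟨hasCanonicalCopy_pathA_six, colorA, not_hasCanonicalCopy_pathA_colorA⟩,
    ⟨hasCanonicalCopy_pathB_six, colorB, not_hasCanonicalCopy_pathB_colorB⟩,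
    ⟨hasCanonicalCopy_pathC_six, colorC, not_hasCanonicalCopy_pathC_colorC⟩⟩
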